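/- For every S ∈ Sym₃,σ(ℝ) and every x ∈ ℝ³ with |x| = 1, the Newtonian stress of the pair (Φ₀, P₀) satisfies σ(Φ₀, P₀)(x) · x = 3Sx, where σ(u,p) := 2D(u) − p·Id and the outward unit normal to the unit sphere at x is x itself. -/

import Mathlib

noncomputable section
open MeasureTheory Metric Real Filter

/-- Three-dimensional Euclidean space. -/
abbrev E3 : Type := EuclideanSpace ℝ (Fin 3)

/-- The `i`-th standard basis vector of `ℝ³`. -/
def e3 (i : Fin 3) : E3 := EuclideanSpace.single i 1

/-- The quadratic form `x · S x`. -/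
def quadForm (S : Matrix (Fin 3) (Fin 3) ℝ) (x : E3) : ℝ := ∑ i, ∑ j, x i * S i j * x j

/-- The matrix-vector product `(S x) i`. -/
def mulVec3 (S : Matrix (Fin 3) (Fin 3) ℝ) (x : E3) (i : Fin 3) : ℝ := ∑ j, S i j * x j

/-- The elementary field `Φ₀ = Φ₀^S`. -/
def Phi0 (S : Matrix (Fin 3) (Fin 3) ℝ) (x : E3) (i : Fin 3) : ℝ :=
  -(5/2) * quadForm S x * x i / ‖x‖^5 - mulVec3 S x i / ‖x‖^5
    + (5/2) * quadForm S x * x i / ‖x‖^7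

/-- The elementary pressure `P₀ = P₀^S`. -/
def P0 (S : Matrix (Fin 3) (Fin 3) ℝ) (x : E3) : ℝ := -5 * quadForm S x / ‖x‖^5

/-- Symmetric gradient `D(u) = (∇u + (∇u)ᵀ)/2` of a vector field, as a 3×3 matrix. -/
def symGrad (u : E3 → Fin 3 → ℝ) (x : E3) : Matrix (Fin 3) (Fin 3) ℝ :=
  Matrix.of fun i j => (fderiv ℝ u x (e3 j) i + fderiv ℝ u x (e3 i) j) / 2

/-- Componentwise Laplacian of a vector field: `(Δu)_i = ∑_j ∂_j ∂_j u_i`. -/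
def vecLap (u : E3 → Fin 3 → ℝ) (x : E3) (i : Fin 3) : ℝ :=
  ∑ j, fderiv ℝ (fun y => fderiv ℝ u y (e3 j) i) x (e3 j)

/-- Gradient of a scalar field. -/
def sgrad (p : E3 → ℝ) (x : E3) (i : Fin 3) : ℝ := fderiv ℝ p x (e3 i)

/-- Divergence of a vector field. -/
def divg (u : E3 → Fin 3 → ℝ) (x : E3) : ℝ := ∑ i, fderiv ℝ u x (e3 i) i

/-- Newtonian stress tensor `σ(u,p) = 2 D(u) - p Id`. -/
def stressT (u : E3 → Fin 3 → ℝ) (p : E3 → ℝ) (x : E3) : Matrix (Fin 3) (Fin 3) ℝ :=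
  Matrix.of fun i j => 2 * symGrad u x i j - p x * (if i = j then 1 else 0)

/-- Frobenius norm of a 3×3 matrix. -/
def matNorm (A : Matrix (Fin 3) (Fin 3) ℝ) : ℝ := Real.sqrt (∑ i, ∑ j, (A i j)^2)

/-! On the unit sphere the factor `‖y‖⁻⁷ - ‖y‖⁻⁵` multiplying the term `(5/2) (y·Sy) y` of `Φ₀`
vanishes, so that term contributes to `∇Φ₀(x)` only through the derivative `-2 x` of the factor.
Hence `∂ⱼ(Φ₀)ᵢ(x) = -Sᵢⱼ - 5 (x·Sx) xᵢ xⱼ + 5 (Sx)ᵢ xⱼ` and `P₀(x) = -5 (x·Sx)`; contracting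
`∇Φ₀ + ∇Φ₀ᵀ - P₀ Id` with `x`, using `|x| = 1` and `Sᵀ = S`, leaves `3 Sx`. -/

section InnerProductSpace

variable {F : Type*} [NormedAddCommGroup F] [InnerProductSpace ℝ F] {x : F}

theorem hasFDerivAt_norm_of_ne_zero (hx : x ≠ 0) :
    HasFDerivAt (‖·‖) (‖x‖⁻¹ • innerSL ℝ x) x := by
  have h := (hasStrictFDerivAt_norm_sq x).hasFDerivAt.sqrt (by positivity)
  simp only [Real.sqrt_sq (norm_nonneg _)] at h
  refine h.congr_fderiv ?_
  ext v
  simp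
  field_simp

theorem hasFDerivAt_inv_norm_pow (hx : x ≠ 0) (n : ℕ) :
    HasFDerivAt (fun y : F => (‖y‖ ^ n)⁻¹) ((-n / ‖x‖ ^ (n + 2)) • innerSL ℝ x) x := by
  have h := (hasDerivAt_inv (pow_ne_zero n (norm_ne_zero_iff.2 hx))).comp_hasFDerivAt x
    ((hasDerivAt_pow n ‖x‖).comp_hasFDerivAt x (hasFDerivAt_norm_of_ne_zero hx))
  refine h.congr_fderiv ?_
  ext v
  have : ‖x‖ ≠ 0 := norm_ne_zero_iff.2 hx
  rcases n with _ | n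
  · simp
  · simp
    field_simp
    ring

end InnerProductSpace

theorem hasFDerivAt_mulVec3 (S : Matrix (Fin 3) (Fin 3) ℝ) (i : Fin 3) (x : E3) :
    HasFDerivAt (fun y => mulVec3 S y i) (∑ j, S i j • EuclideanSpace.proj j : E3 →L[ℝ] ℝ) x := by
  have h : (fun y => mulVec3 S y i) = ⇑(∑ j, S i j • EuclideanSpace.proj j : E3 →L[ℝ] ℝ) := by
    ext y
    simp [mulVec3]
  exact h ▸ ContinuousLinearMap.hasFDerivAt _

theorem differentiable_quadForm (S : Matrix (Fin 3) (Fin 3) ℝ) : Differentiable ℝ (quadForm S) := by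
  unfold quadForm
  fun_prop

theorem Phi0_apply_eq (S : Matrix (Fin 3) (Fin 3) ℝ) (y : E3) (i : Fin 3) :
    Phi0 S y i = 5 / 2 * quadForm S y * y i * ((‖y‖ ^ 7)⁻¹ - (‖y‖ ^ 5)⁻¹)
      - mulVec3 S y i * (‖y‖ ^ 5)⁻¹ := by
  simp only [Phi0]
  ring

theorem hasFDerivAt_Phi0_apply (S : Matrix (Fin 3) (Fin 3) ℝ) {x : E3} (hx : ‖x‖ = 1) (i : Fin 3) :
    HasFDerivAt (fun y => Phi0 S y i)
      ((5 * (mulVec3 S x i - quadForm S x * x i)) • innerSL ℝ x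
        - ∑ j, S i j • EuclideanSpace.proj j) x := by
  have hx0 : x ≠ 0 := norm_ne_zero_iff.1 (by simp [hx])
  have hc : DifferentiableAt ℝ (fun y => 5 / 2 * quadForm S y * y i) x := by
    have := differentiable_quadForm S x
    fun_prop
  have h := (hc.hasFDerivAt.mul ((hasFDerivAt_inv_norm_pow hx0 7).sub
    (hasFDerivAt_inv_norm_pow hx0 5))).sub
    ((hasFDerivAt_mulVec3 S i x).mul (hasFDerivAt_inv_norm_pow hx0 5))
  rw [funext fun y => Phi0_apply_eq S y i]
  refine h.congr_fderiv ?_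
  ext v
  simp [hx]
  ring

theorem fderiv_Phi0_e3 (S : Matrix (Fin 3) (Fin 3) ℝ) {x : E3} (hx : ‖x‖ = 1) (i j : Fin 3) :
    fderiv ℝ (Phi0 S) x (e3 j) i
      = -S i j - 5 * quadForm S x * x i * x j + 5 * mulVec3 S x i * x j := by
  rw [(hasFDerivAt_pi.2 fun i => hasFDerivAt_Phi0_apply S hx i).fderiv]
  simp [e3, EuclideanSpace.inner_single_right]
  ring

theorem sum_stressT_mul (u : E3 → Fin 3 → ℝ) (p : E3 → ℝ) (x : E3) (i : Fin 3) :
    ∑ j, stressT u p x i j * x j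
      = ∑ j, (fderiv ℝ u x (e3 j) i + fderiv ℝ u x (e3 i) j) * x j - p x * x i := by
  simp [stressT, symGrad, sub_mul, Finset.sum_sub_distrib, mul_div_cancel₀]

theorem stress_Phi0_P0_on_sphere_general (S : Matrix (Fin 3) (Fin 3) ℝ)
    (hSsym : S.IsSymm) :
    ∀ x : E3, ‖x‖ = 1 →
      ∀ i, (∑ j, stressT (Phi0 S) (P0 S) x i j * x j) = 3 * mulVec3 S x i := by
  intro x hx i
  have hP : P0 S x = -5 * quadForm S x := by simp [P0, hx]
  have hx2 : ∑ j, x j ^ 2 = 1 := by rw [← EuclideanSpace.real_norm_sq_eq, hx, one_pow]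
  have hSx : ∑ j, S i j * x j = mulVec3 S x i := rfl
  have hSTx : ∑ j, S j i * x j = mulVec3 S x i :=
    Finset.sum_congr rfl fun j _ => by rw [hSsym.apply]
  have hQ : ∑ j, mulVec3 S x j * x j = quadForm S x := by
    simp only [quadForm, mulVec3, Finset.sum_mul]
    exact Finset.sum_congr rfl fun j _ => Finset.sum_congr rfl fun k _ => by ring
  rw [sum_stressT_mul, hP]
  simp only [fderiv_Phi0_e3 S hx, Fin.sum_univ_three] at hx2 hSx hSTx hQ ⊢
  linear_combination -hSx - hSTx + (5 * mulVec3 S x i - 10 * quadForm S x * x i) * hx2 + 5 * x i * hQ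

/-- **Stress of `(Φ₀, P₀)` on the unit sphere**: for `|x| = 1`,
`σ(Φ₀,P₀)(x) · x = 3 Sx`, where `σ(u,p) = 2D(u) - p·Id` and the outward unit
normal at `x` is `x` itself. -/
theorem stress_Phi0_P0_on_sphere (S : Matrix (Fin 3) (Fin 3) ℝ)
    (hSsym : S.IsSymm) (hStr : S.trace = 0) :
    ∀ x : E3, ‖x‖ = 1 →
      ∀ i, (∑ j, stressT (Phi0 S) (P0 S) x i j * x j) = 3 * mulVec3 S x i :=
  stress_Phi0_P0_on_sphere_general S hSsym
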